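/- arXiv:2304.08004 — 5 statements merged into one kernel-verified Lean document; each statement's English description precedes it below -/
import Mathlib

section
/- Let q be an odd prime power, d ≥ 1, and V = {(x,y) ∈ F_q^d × F_q^d : ‖x‖ = ‖y‖} where ‖x‖ = x₁²+⋯+x_d². Then the Fourier transform V̂(m,m') = q^{−2d} Σ_{(x,y)∈V} χ(−x·m − y·m') equals: (1/q) + (q−1)/q^{d+1} if (m,m')=(0,0); (q−1)/q^{d+1} if (m,m')≠(0,0) and ‖m‖=‖m'‖; and −1/q^{d+1} if ‖m‖≠‖m'‖. -/
/-!
Write the indicator of `‖x‖ = ‖y‖` as `q⁻¹ ∑ₛ χ (s (‖x‖ - ‖y‖))`; the sum then factors as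
`q⁻¹ ∑ₛ Q(s, -m) Q(-s, -m')` with `Q(s, b) = ∑ₓ χ (s ‖x‖ + x ⬝ᵥ b)`. The term `s = 0` is
`q^{2d} [m = m' = 0]` by orthogonality. For `s ≠ 0`, completing the square gives
`Q(s, b) = χ (-‖b‖ / 4s) Q(s, 0)`, and the shift `y ↦ x + y` in `∑ₓ ∑ᵧ χ (s ‖x‖ - s ‖y‖)` leaves a
linear character sum, so `Q(s, 0) Q(-s, 0) = q^d` without evaluating any Gauss sum. Finally
`∑_{s ≠ 0} χ ((‖m'‖ - ‖m‖) / 4s) = q [‖m‖ = ‖m'‖] - 1`.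
-/

open Finset Matrix

namespace AddChar

variable {F R ι : Type*} [Field F] [Fintype F] [CommRing R] [Fintype ι] [DecidableEq ι]
  (χ : AddChar F R)

def quadraticSum (s : F) (b : ι → F) : R := ∑ x : ι → F, χ (s * (x ⬝ᵥ x) + x ⬝ᵥ b)

theorem quadraticSum_eq_mul_quadraticSum_zero {s : F} (h2 : (2 : F) ≠ 0) (hs : s ≠ 0)
    (b : ι → F) :
    χ.quadraticSum s b = χ (-(b ⬝ᵥ b) / (4 * s)) * χ.quadraticSum s (0 : ι → F) := by
  have h4 : (4 : F) ≠ 0 := (by norm_num : (2 : F) * 2 = 4) ▸ mul_ne_zero h2 h2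
  rw [quadraticSum, quadraticSum, Finset.mul_sum]
  refine Fintype.sum_equiv (Equiv.addRight ((2 * s)⁻¹ • b)) _ _ fun x => ?_
  rw [← map_add_eq_mul]
  congr 1
  simp only [Equiv.coe_addRight, add_dotProduct, dotProduct_add, smul_dotProduct,
    dotProduct_smul, dotProduct_comm b x, dotProduct_zero, smul_eq_mul]
  field_simp
  ring

variable [IsDomain R]

theorem sum_apply_dotProduct [DecidableEq F] (hχ : χ ≠ 1) (b : ι → F) :
    ∑ x : ι → F, χ (x ⬝ᵥ b) = if b = 0 then (Fintype.card F : R) ^ Fintype.card ι else 0 := by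
  let ψ : AddChar (ι → F) R :=
    χ.compAddMonoidHom (AddMonoidHom.mk' (· ⬝ᵥ b) fun x y => add_dotProduct x y b)
  have hψ : ψ = 0 ↔ b = 0 := by
    refine ⟨fun h => ?_, fun h => ?_⟩
    · by_contra hb
      obtain ⟨i, hi⟩ := Function.ne_iff.mp hb
      obtain ⟨u, hu⟩ := ne_one_iff.mp hχ
      exact hu (by simpa [ψ, single_dotProduct, div_mul_cancel₀ _ hi] using
        DFunLike.congr_fun h (Pi.single i (u / b i)))
    · ext x
      simp [ψ, h]
  classical
  exact ψ.sum_eq_ite.trans (by simp only [hψ, Fintype.card_fun, Nat.cast_pow])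

theorem sum_apply_div [DecidableEq F] (hχ : χ ≠ 1) (c : F) :
    ∑ s, χ (c / s) = if c = 0 then (Fintype.card F : R) else 0 := by
  have h := sum_mulShift (ψ := χ) c (IsPrimitive.of_ne_one hχ)
  push_cast at h
  rw [← h]
  exact Fintype.sum_equiv (Equiv.inv F) _ _ fun s => by simp [div_eq_mul_inv, mul_comm]

theorem quadraticSum_zero_left [DecidableEq F] (hχ : χ ≠ 1) (b : ι → F) :
    χ.quadraticSum 0 b = if b = 0 then (Fintype.card F : R) ^ Fintype.card ι else 0 := by
  simp only [quadraticSum, zero_mul, zero_add, χ.sum_apply_dotProduct hχ]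

theorem quadraticSum_zero_mul_neg {s : F} (hχ : χ ≠ 1) (h2 : (2 : F) ≠ 0) (hs : s ≠ 0) :
    χ.quadraticSum s (0 : ι → F) * χ.quadraticSum (-s) (0 : ι → F) =
      (Fintype.card F : R) ^ Fintype.card ι := by
  classical
  have shift (x y : ι → F) :
      χ (s * (x ⬝ᵥ x) + x ⬝ᵥ 0) * χ (-s * ((x + y) ⬝ᵥ (x + y)) + (x + y) ⬝ᵥ 0) =
        χ (-s * (y ⬝ᵥ y)) * χ (x ⬝ᵥ (-(2 * s) • y)) := by
    simp only [← map_add_eq_mul, add_dotProduct, dotProduct_add, dotProduct_smul,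
      dotProduct_comm y x, dotProduct_zero, smul_eq_mul]
    congr 1
    ring
  calc χ.quadraticSum s (0 : ι → F) * χ.quadraticSum (-s) (0 : ι → F)
      = ∑ x : ι → F, ∑ y : ι → F, χ (-s * (y ⬝ᵥ y)) * χ (x ⬝ᵥ (-(2 * s) • y)) := by
        rw [quadraticSum, quadraticSum, Finset.sum_mul_sum]
        refine Finset.sum_congr rfl fun x _ => ?_
        rw [← Fintype.sum_equiv (Equiv.addLeft x) _ _ fun y => rfl]
        exact Finset.sum_congr rfl fun y _ => shift x y
    _ = ∑ y : ι → F, χ (-s * (y ⬝ᵥ y)) *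
          if y = 0 then (Fintype.card F : R) ^ Fintype.card ι else 0 := by
        rw [Finset.sum_comm]
        refine Finset.sum_congr rfl fun y _ => ?_
        rw [← Finset.mul_sum, χ.sum_apply_dotProduct hχ]
        simp only [smul_eq_zero_iff_right (neg_ne_zero.mpr (mul_ne_zero h2 hs))]
    _ = (Fintype.card F : R) ^ Fintype.card ι := by simp

theorem quadraticSum_mul_quadraticSum_neg {s : F} (hχ : χ ≠ 1) (h2 : (2 : F) ≠ 0)
    (hs : s ≠ 0) (b b' : ι → F) :
    χ.quadraticSum s b * χ.quadraticSum (-s) b' =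
      χ ((b' ⬝ᵥ b' - b ⬝ᵥ b) / (4 * s)) * (Fintype.card F : R) ^ Fintype.card ι := by
  rw [χ.quadraticSum_eq_mul_quadraticSum_zero h2 hs,
    χ.quadraticSum_eq_mul_quadraticSum_zero h2 (neg_ne_zero.mpr hs),
    ← χ.quadraticSum_zero_mul_neg hχ h2 hs, mul_mul_mul_comm, ← map_add_eq_mul]
  congr 2
  rw [mul_neg, div_neg]
  ring

theorem sum_quadraticSum_mul_quadraticSum_neg [DecidableEq F] (hχ : χ ≠ 1)
    (h2 : (2 : F) ≠ 0) (b b' : ι → F) :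
    ∑ s, χ.quadraticSum s b * χ.quadraticSum (-s) b' =
      (if b = 0 ∧ b' = 0 then (Fintype.card F : R) ^ (2 * Fintype.card ι) else 0) +
        (Fintype.card F : R) ^ Fintype.card ι *
          ((if b ⬝ᵥ b = b' ⬝ᵥ b' then (Fintype.card F : R) else 0) - 1) := by
  have h4 : (4 : F) ≠ 0 := (by norm_num : (2 : F) * 2 = 4) ▸ mul_ne_zero h2 h2
  -- at `s = 0` the junk value `c / (4 * 0) = 0` contributes `χ 0 = 1`
  have sum_ne_zero (c : F) :
      ∑ s ∈ {0}ᶜ, χ (c / (4 * s)) = (if c = 0 then (Fintype.card F : R) else 0) - 1 := by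
    have h := Fintype.sum_eq_add_sum_compl 0 fun s => χ (c / 4 / s)
    simp only [div_zero, map_zero_eq_one, χ.sum_apply_div hχ, div_eq_zero_iff, h4,
      or_false] at h
    simp only [h, add_sub_cancel_left, div_mul_eq_div_div]
  rw [Fintype.sum_eq_add_sum_compl 0, χ.quadraticSum_zero_left hχ, neg_zero,
    χ.quadraticSum_zero_left hχ, ite_zero_mul_ite_zero, ← pow_add, ← two_mul,
    Finset.sum_congr rfl fun s hs => χ.quadraticSum_mul_quadraticSum_neg hχ h2
      (Finset.mem_compl.mp hs ∘ Finset.mem_singleton.mpr) b b',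
    ← Finset.sum_mul, sum_ne_zero, mul_comm _ (_ ^ Fintype.card ι)]
  simp only [sub_eq_zero, eq_comm (a := b' ⬝ᵥ b')]

theorem card_mul_sum_ite_dotProduct_self_eq [DecidableEq F] (hχ : χ ≠ 1)
    (m m' : ι → F) :
    (Fintype.card F : R) * ∑ x : ι → F, ∑ y : ι → F,
        (if x ⬝ᵥ x = y ⬝ᵥ y then χ (-(x ⬝ᵥ m) - y ⬝ᵥ m') else 0) =
      ∑ s, χ.quadraticSum s (-m) * χ.quadraticSum (-s) (-m') := by
  have orth (x y : ι → F) :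
      (Fintype.card F : R) * (if x ⬝ᵥ x = y ⬝ᵥ y then χ (-(x ⬝ᵥ m) - y ⬝ᵥ m') else 0) =
        ∑ s, χ (s * (x ⬝ᵥ x) + x ⬝ᵥ (-m)) * χ (-s * (y ⬝ᵥ y) + y ⬝ᵥ (-m')) := by
    have h := sum_mulShift (ψ := χ) (x ⬝ᵥ x - y ⬝ᵥ y) (IsPrimitive.of_ne_one hχ)
    push_cast at h
    simp only [sub_eq_zero] at h
    rw [mul_ite, mul_zero, ← ite_zero_mul, ← h, Finset.sum_mul]
    refine Finset.sum_congr rfl fun s _ => ?_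
    rw [← map_add_eq_mul, ← map_add_eq_mul, dotProduct_neg, dotProduct_neg]
    congr 1
    ring
  simp only [Finset.mul_sum, orth]
  simp only [quadraticSum, Finset.sum_mul_sum]
  exact (Finset.sum_congr rfl fun x _ => Finset.sum_comm).trans Finset.sum_comm

end AddChar

/-- Fourier transform of the variety `V = {(x,y) : ‖x‖ = ‖y‖} ⊆ F_q^{2d}`:
`V̂(0,0) = 1/q + (q−1)/q^{d+1}`, `V̂(m,m') = (q−1)/q^{d+1}` if `(m,m') ≠ (0,0)`
and `‖m‖ = ‖m'‖`, and `V̂(m,m') = −1/q^{d+1}` if `‖m‖ ≠ ‖m'‖`. -/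
theorem stmt_7 (F : Type) [Field F] [Fintype F] [DecidableEq F]
    (hq : ringChar F ≠ 2)
    (χ : AddChar F ℂ) (hχ : χ ≠ 1)
    (d : ℕ)
    (Vhat : (Fin d → F) → (Fin d → F) → ℂ)
    (hV : ∀ m m', Vhat m m'
      = ((Fintype.card F : ℂ) ^ (2 * d))⁻¹ *
          ∑ x : Fin d → F, ∑ y : Fin d → F,
            if x ⬝ᵥ x = y ⬝ᵥ y then χ (-(x ⬝ᵥ m) - y ⬝ᵥ m') else 0)
    (m m' : Fin d → F) :
    (m = 0 ∧ m' = 0 →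
      Vhat m m' = 1 / (Fintype.card F : ℂ)
        + ((Fintype.card F : ℂ) - 1) / (Fintype.card F : ℂ) ^ (d + 1))
    ∧ (¬(m = 0 ∧ m' = 0) → m ⬝ᵥ m = m' ⬝ᵥ m' →
      Vhat m m' = ((Fintype.card F : ℂ) - 1) / (Fintype.card F : ℂ) ^ (d + 1))
    ∧ (m ⬝ᵥ m ≠ m' ⬝ᵥ m' →
      Vhat m m' = -1 / (Fintype.card F : ℂ) ^ (d + 1)) := by
  have hq0 : (Fintype.card F : ℂ) ≠ 0 := Nat.cast_ne_zero.mpr Fintype.card_ne_zero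
  have key := χ.card_mul_sum_ite_dotProduct_self_eq hχ m m'
  rw [χ.sum_quadraticSum_mul_quadraticSum_neg hχ (Ring.two_ne_zero hq),
    ← eq_inv_mul_iff_mul_eq₀ hq0] at key
  simp only [neg_eq_zero, neg_dotProduct, dotProduct_neg, neg_neg, Fintype.card_fin] at key
  rw [hV m m', key]
  refine ⟨fun h0 => ?_, fun h0 hmm => ?_, fun hne => ?_⟩
  · rw [if_pos h0, if_pos (by rw [h0.1, h0.2])]
    field_simp
    ring
  · rw [if_neg h0, if_pos hmm]
    field_simp
    ring
  · rw [if_neg fun h0 => hne (by rw [h0.1, h0.2]), if_neg hne]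
    field_simp
    ring
end

section
/- Let q be an odd prime power and for j ∈ F_q let S_j = {x ∈ F_q^d : ‖x‖ = j}. For any m, m' ∈ F_q^d: Σ_{j∈F_q} Ŝ_j(m) · conj(Ŝ_j(m')) = δ₀(m)δ₀(m')/q + q^{−d−1} Σ_{s∈F_q*} χ(s(‖m‖−‖m'‖)), where Ŝ_j(m) = q^{−d} Σ_{x∈S_j} χ(−m·x) and δ₀ is the indicator of the zero vector. -/
/-!
Writing the indicator of `‖x‖ = ‖y‖` as `q⁻¹ ∑ₛ χ(s(‖x‖ - ‖y‖))` turns the left-hand side into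
`q^(-2d-1) ∑ₛ G(s, m) conj G(s, m')` with `G(s, m) = ∑ₓ χ(s‖x‖ - m ⬝ x)`. For `s = 0` this is
`q^d δ₀(m)`. For `s ≠ 0` completing the square gives `G(s, m) = χ(-‖m‖/(4s)) G(s, 0)` and
`|G(s, 0)|² = q^d`, and the involution `s ↦ -(4s)⁻¹` of `Fˣ` turns the remaining phases into
`χ(s(‖m‖ - ‖m'‖))`.
-/

open Finset Matrix ComplexConjugate

theorem Finset.sum_fiberwise_mul_sum_fiberwise {α β R : Type*} [Fintype α] [Fintype β]
    [DecidableEq β] [CommSemiring R] (N : α → β) (f g : α → R) :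
    ∑ j, (∑ x ∈ univ.filter (N · = j), f x) * ∑ y ∈ univ.filter (N · = j), g y
      = ∑ x, ∑ y, if N x = N y then f x * g y else 0 := by
  simp_rw [sum_filter, sum_mul_sum]
  rw [sum_comm]
  refine sum_congr rfl fun x _ => ?_
  rw [sum_comm]
  refine sum_congr rfl fun y _ => ?_
  simp only [ite_mul, mul_ite, zero_mul, mul_zero, sum_ite_eq, mem_univ, if_true]

section

variable {F : Type*} [Field F] [Fintype F] {d : ℕ}

theorem AddChar.sum_apply_dotProduct_s8 [DecidableEq F] {R : Type*} [CommRing R] [IsDomain R]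
    {χ : AddChar F R} (hχ : χ ≠ 1) (c : Fin d → F) :
    ∑ x : Fin d → F, χ (x ⬝ᵥ c) = if c = 0 then (Fintype.card F : R) ^ d else 0 := by
  split_ifs with hc
  · simp [hc]
  obtain ⟨i, hi⟩ : ∃ i, c i ≠ 0 := Function.ne_iff.mp hc
  obtain ⟨a, ha⟩ := AddChar.ne_one_iff.mp hχ
  let ψ : AddChar (Fin d → F) R :=
    χ.compAddMonoidHom (AddMonoidHom.mk' (· ⬝ᵥ c) fun x y => add_dotProduct x y c)
  have hψ : ψ ≠ 1 := AddChar.ne_one_iff.mpr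
    ⟨Pi.single i (a / c i), by simpa [ψ, single_dotProduct, div_mul_cancel₀ _ hi] using ha⟩
  exact AddChar.sum_eq_zero_of_ne_one hψ

theorem sum_ne_zero_comp_neg_inv_mul {M : Type*} [AddCommMonoid M] [DecidableEq F] {a : F}
    (ha : a ≠ 0) (f : F → M) :
    ∑ s ∈ univ.filter (· ≠ 0), f (-(a * s)⁻¹) = ∑ s ∈ univ.filter (· ≠ 0), f s := by
  have hinv : Function.Involutive fun s : F => -(a * s)⁻¹ := fun s => by
    by_cases hs : s = 0
    · simp [hs]
    · field_simp
  refine sum_equiv hinv.toPerm (fun s => ?_) fun s _ => rfl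
  simp [ha]

def quadGaussSum {R : Type*} [CommRing R] (χ : AddChar F R) (s : F) (m : Fin d → F) : R :=
  ∑ x, χ (s * (x ⬝ᵥ x) - m ⬝ᵥ x)

theorem quadGaussSum_zero_left [DecidableEq F] {R : Type*} [CommRing R] [IsDomain R]
    {χ : AddChar F R} (hχ : χ ≠ 1) (m : Fin d → F) :
    quadGaussSum χ 0 m = if m = 0 then (Fintype.card F : R) ^ d else 0 := by
  have h : ∀ x : Fin d → F, 0 * (x ⬝ᵥ x) - m ⬝ᵥ x = x ⬝ᵥ -m := fun x => by
    rw [dotProduct_neg, dotProduct_comm x m]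
    ring
  simp only [quadGaussSum, h, AddChar.sum_apply_dotProduct_s8 hχ, neg_eq_zero]

theorem quadGaussSum_eq_mul {R : Type*} [CommRing R] (χ : AddChar F R) {s : F}
    (h2 : (2 : F) ≠ 0) (hs : s ≠ 0) (m : Fin d → F) :
    quadGaussSum χ s m = χ (-(4 * s)⁻¹ * (m ⬝ᵥ m)) * quadGaussSum χ s (0 : Fin d → F) := by
  have h4 : (4 : F) ≠ 0 := by
    simpa only [show (2 : F) * 2 = 4 by norm_num] using mul_ne_zero h2 h2
  set c : Fin d → F := (2 * s)⁻¹ • m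
  rw [quadGaussSum, ← Equiv.sum_comp (Equiv.addRight c), quadGaussSum, mul_sum]
  refine sum_congr rfl fun x _ => ?_
  rw [← AddChar.map_add_eq_mul]
  congr 1
  simp only [c, Equiv.coe_addRight, add_dotProduct, dotProduct_add, smul_dotProduct,
    dotProduct_smul, smul_eq_mul, zero_dotProduct, dotProduct_comm m x]
  field_simp
  ring

theorem quadGaussSum_mul_conj [DecidableEq F] {χ : AddChar F ℂ} (hχ : χ ≠ 1) {s : F}
    (h2 : (2 : F) ≠ 0) (hs : s ≠ 0) :
    quadGaussSum χ s (0 : Fin d → F) * conj (quadGaussSum χ s (0 : Fin d → F))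
      = (Fintype.card F : ℂ) ^ d := by
  -- After `x = y + w`, the sum over `y` is a character sum of a linear form, zero unless `w = 0`.
  have hshift : ∀ y w : Fin d → F,
      χ (s * ((w + y) ⬝ᵥ (w + y))) * conj (χ (s * (y ⬝ᵥ y)))
        = χ (s * (w ⬝ᵥ w)) * χ (y ⬝ᵥ ((2 * s) • w)) := fun y w => by
    rw [← AddChar.map_neg_eq_conj, ← AddChar.map_add_eq_mul, ← AddChar.map_add_eq_mul]
    congr 1
    simp only [add_dotProduct, dotProduct_add, dotProduct_smul, smul_eq_mul, dotProduct_comm w y]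
    ring
  have h2s : 2 * s ≠ 0 := mul_ne_zero h2 hs
  simp only [quadGaussSum, zero_dotProduct, sub_zero, map_sum]
  rw [sum_mul_sum, sum_comm]
  refine (sum_congr rfl fun y _ => (Equiv.sum_comp (Equiv.addRight y) _).symm).trans ?_
  simp only [Equiv.coe_addRight, hshift]
  rw [sum_comm]
  simp only [← mul_sum, AddChar.sum_apply_dotProduct_s8 hχ, smul_eq_zero, h2s, false_or, mul_ite,
    mul_zero, sum_ite_eq', mem_univ, if_true]
  simp

theorem quadGaussSum_mul_conj_of_ne_zero [DecidableEq F] {χ : AddChar F ℂ} (hχ : χ ≠ 1)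
    {s : F} (h2 : (2 : F) ≠ 0) (hs : s ≠ 0) (m m' : Fin d → F) :
    quadGaussSum χ s m * conj (quadGaussSum χ s m')
      = (Fintype.card F : ℂ) ^ d * χ (-(4 * s)⁻¹ * (m ⬝ᵥ m - m' ⬝ᵥ m')) := by
  rw [quadGaussSum_eq_mul χ h2 hs m, quadGaussSum_eq_mul χ h2 hs m', map_mul (starRingEnd ℂ),
    ← AddChar.map_neg_eq_conj, mul_mul_mul_comm, mul_comm, quadGaussSum_mul_conj hχ h2 hs,
    ← AddChar.map_add_eq_mul]
  congr 2
  ring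

theorem sum_sphere_mul_conj [DecidableEq F] {χ : AddChar F ℂ} (hχ : χ ≠ 1) (m m' : Fin d → F) :
    ∑ j, (∑ x ∈ univ.filter (fun x : Fin d → F => x ⬝ᵥ x = j), χ (-(m ⬝ᵥ x)))
        * conj (∑ y ∈ univ.filter (fun y : Fin d → F => y ⬝ᵥ y = j), χ (-(m' ⬝ᵥ y)))
      = (Fintype.card F : ℂ)⁻¹ * ∑ s, quadGaussSum χ s m * conj (quadGaussSum χ s m') := by
  have hcard : (Fintype.card F : ℂ) ≠ 0 := Nat.cast_ne_zero.mpr Fintype.card_ne_zero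
  have hterm : ∀ (s : F) (x y : Fin d → F),
      χ (s * (x ⬝ᵥ x) - m ⬝ᵥ x) * conj (χ (s * (y ⬝ᵥ y) - m' ⬝ᵥ y))
        = χ (s * (x ⬝ᵥ x - y ⬝ᵥ y)) * (χ (-(m ⬝ᵥ x)) * conj (χ (-(m' ⬝ᵥ y)))) := by
    intro s x y
    simp only [← AddChar.map_neg_eq_conj, ← AddChar.map_add_eq_mul]
    congr 1
    ring
  simp only [map_sum]
  rw [sum_fiberwise_mul_sum_fiberwise (fun x : Fin d → F => x ⬝ᵥ x)]
  simp only [quadGaussSum, map_sum, sum_mul_sum, hterm]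
  symm
  rw [sum_comm, mul_sum]
  refine sum_congr rfl fun x _ => ?_
  rw [sum_comm, mul_sum]
  refine sum_congr rfl fun y _ => ?_
  rw [← sum_mul, AddChar.sum_mulShift _ (AddChar.IsPrimitive.of_ne_one hχ)]
  simp only [sub_eq_zero]
  split_ifs <;> simp [hcard]

end

/-- For spheres `S_j = {x ∈ F_q^d : ‖x‖ = j}`, one has
`Σ_j Ŝ_j(m) conj(Ŝ_j(m')) = δ₀(m)δ₀(m')/q + q^{−d−1} Σ_{s≠0} χ(s(‖m‖−‖m'‖))`. -/
theorem stmt_8 (F : Type) [Field F] [Fintype F] [DecidableEq F]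
    (hq : ringChar F ≠ 2)
    (χ : AddChar F ℂ) (hχ : χ ≠ 1)
    (d : ℕ)
    (Shat : F → (Fin d → F) → ℂ)
    (hS : ∀ j m, Shat j m
      = ((Fintype.card F : ℂ) ^ d)⁻¹ *
          ∑ x ∈ Finset.univ.filter (fun x : Fin d → F => x ⬝ᵥ x = j),
            χ (-(m ⬝ᵥ x)))
    (m m' : Fin d → F) :
    ∑ j : F, Shat j m * (starRingEnd ℂ) (Shat j m')
      = (if m = 0 then 1 else 0) * (if m' = 0 then 1 else 0) / (Fintype.card F : ℂ)
        + ((Fintype.card F : ℂ) ^ (d + 1))⁻¹ *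
            ∑ s ∈ Finset.univ.filter (fun s : F => s ≠ 0),
              χ (s * (m ⬝ᵥ m - m' ⬝ᵥ m')) := by
  have hcard : (Fintype.card F : ℂ) ≠ 0 := Nat.cast_ne_zero.mpr Fintype.card_ne_zero
  have h2 : (2 : F) ≠ 0 := Ring.two_ne_zero hq
  have h4 : (4 : F) ≠ 0 := by
    simpa only [show (2 : F) * 2 = 4 by norm_num] using mul_ne_zero h2 h2
  simp only [hS, map_mul, map_inv₀, map_pow, map_natCast, mul_mul_mul_comm, ← mul_sum]
  rw [sum_sphere_mul_conj hχ, ← add_sum_erase _ _ (mem_univ 0), ← filter_ne',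
    quadGaussSum_zero_left hχ, quadGaussSum_zero_left hχ,
    sum_congr rfl fun s hs => quadGaussSum_mul_conj_of_ne_zero hχ h2 (mem_filter.mp hs).2 m m',
    ← mul_sum, sum_ne_zero_comp_neg_inv_mul h4 (fun s => χ (s * (m ⬝ᵥ m - m' ⬝ᵥ m')))]
  simp only [apply_ite (starRingEnd ℂ), map_pow, map_natCast, map_zero]
  generalize ∑ s ∈ univ.filter (· ≠ 0), χ (s * (m ⬝ᵥ m - m' ⬝ᵥ m')) = T
  field_simp
  split_ifs <;> ring
end

section
/- Let q be an odd prime power, and for j ∈ F_q let S_j ⊆ F_q^d be the sphere {‖x‖ = j}. Then Ŝ_j(m) = q^{−1}δ₀(m) + q^{−d−1} η(−1)^d G₁^d Σ_{r∈F_q*} η(r)^d χ(jr + ‖m‖/(4r)), where η is the quadratic character and G₁ the Gauss sum. -/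
/-!
The indicator of the sphere has the Fourier expansion `q · 1[‖x‖ = j] = ∑_r χ(r (j - ‖x‖))`.
Exchanging the sums, the term `r = 0` is `∑_x χ(m·x) = q^d δ₀(m)`, and for `r ≠ 0` the sum over
`x` factors into `d` one-variable sums `∑_y χ(-r y² + m_i y)`; completing the square turns each
into `η(-r) G₁ χ(m_i² / (4r))`, since `y ↦ y²` takes each value `t` exactly `1 + η(t)` times.
-/

open Finset Matrix

lemma AddChar.map_sum_eq_prod {A M ι : Type*} [AddCommMonoid A] [CommMonoid M]
    (ψ : AddChar A M) (s : Finset ι) (f : ι → A) :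
    ψ (∑ i ∈ s, f i) = ∏ i ∈ s, ψ (f i) := by
  classical
  induction s using Finset.induction with
  | empty => simp
  | insert i s hi ih => rw [sum_insert hi, map_add_eq_mul, ih, prod_insert hi]

lemma AddChar.sum_pi_map_sum_eq_prod_sum {A R ι : Type*} [AddCommMonoid A] [Fintype A]
    [CommRing R] [Fintype ι] [DecidableEq ι] (ψ : AddChar A R) (f : ι → A → A) :
    ∑ x : ι → A, ψ (∑ i, f i (x i)) = ∏ i, ∑ y, ψ (f i y) := by
  simp only [ψ.map_sum_eq_prod, Fintype.prod_sum]

variable {F R : Type*} [Field F] [Fintype F] [DecidableEq F] [CommRing R]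
  {ψ : AddChar F R}

noncomputable abbrev quadraticGaussSum (ψ : AddChar F R) : R :=
  gaussSum ((quadraticChar F).ringHomComp (Int.castRingHom R)) ψ

lemma sum_quadraticChar_mul_addChar_mul {r : F} (hr : r ≠ 0) :
    ∑ t, (quadraticChar F t : R) * ψ (r * t) = quadraticChar F r * quadraticGaussSum ψ := by
  have h := gaussSum_mulShift_eq ((quadraticChar F).ringHomComp (Int.castRingHom R)) ψ
    (Units.mk0 r hr)
  rw [((quadraticChar_isQuadratic F).comp _).inv] at h
  simpa [gaussSum] using h

variable [IsDomain R]

lemma sum_addChar_mul (hψ : ψ ≠ 1) (b : F) :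
    ∑ r, ψ (r * b) = if b = 0 then (Fintype.card F : R) else 0 := by
  simpa using AddChar.sum_mulShift b (.of_ne_one hψ)

lemma sum_addChar_mul_sq (hF : ringChar F ≠ 2) (hψ : ψ ≠ 1) {r : F} (hr : r ≠ 0) :
    ∑ y, ψ (r * y ^ 2) = quadraticChar F r * quadraticGaussSum ψ := by
  have hfiber : ∀ t : F, ∑ y ∈ univ.filter (fun y : F ↦ y ^ 2 = t), ψ (r * y ^ 2)
      = ((quadraticChar F t : R) + 1) * ψ (r * t) := fun t ↦ by
    have hcard : (#{y : F | y ^ 2 = t} : ℤ) = quadraticChar F t + 1 := by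
      simpa [Set.toFinset_ofPred] using quadraticChar_card_sqrts hF t
    rw [sum_congr rfl fun y hy ↦ by rw [(mem_filter.mp hy).2], sum_const, nsmul_eq_mul,
      ← Int.cast_natCast, hcard, Int.cast_add, Int.cast_one]
  rw [← sum_fiberwise univ (fun y ↦ y ^ 2)]
  simp_rw [hfiber, add_mul, one_mul, sum_add_distrib, mul_comm r, sum_addChar_mul hψ, if_neg hr,
    add_zero, mul_comm _ r]
  exact sum_quadraticChar_mul_addChar_mul hr

lemma sum_addChar_quadratic (hF : ringChar F ≠ 2) (hψ : ψ ≠ 1) {r : F} (hr : r ≠ 0) (b : F) :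
    ∑ y, ψ (r * y ^ 2 + b * y)
      = quadraticChar F r * quadraticGaussSum ψ * ψ (-b ^ 2 / (4 * r)) := by
  have h2 : (2 : F) ≠ 0 := Ring.two_ne_zero hF
  have h4 : (4 : F) ≠ 0 := by
    rw [show (4 : F) = 2 * 2 by norm_num]
    exact mul_ne_zero h2 h2
  have hsquare : ∀ y, r * (y - b / (2 * r)) ^ 2 + b * (y - b / (2 * r))
      = r * y ^ 2 + -b ^ 2 / (4 * r) := fun y ↦ by
    field_simp
    ring
  rw [← (Equiv.subRight (b / (2 * r))).sum_comp]
  simp_rw [Equiv.subRight_apply, hsquare, AddChar.map_add_eq_mul, ← sum_mul,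
    sum_addChar_mul_sq hF hψ hr]

section Pi

variable {ι : Type*} [Fintype ι] [DecidableEq ι]

lemma sum_addChar_dotProduct (hψ : ψ ≠ 1) (m : ι → F) :
    ∑ x : ι → F, ψ (m ⬝ᵥ x) = if m = 0 then (Fintype.card F : R) ^ Fintype.card ι else 0 := by
  have hdot : ∀ x : ι → F, m ⬝ᵥ x = ∑ i, x i * m i := fun x ↦ by
    simp only [dotProduct, mul_comm]
  simp_rw [hdot, ψ.sum_pi_map_sum_eq_prod_sum fun i y ↦ y * m i, sum_addChar_mul hψ]
  split_ifs with hm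
  · simp [hm]
  · obtain ⟨i, hi⟩ := Function.ne_iff.mp hm
    exact prod_eq_zero (mem_univ i) (if_neg hi)

lemma sum_addChar_quadraticForm (hF : ringChar F ≠ 2) (hψ : ψ ≠ 1) {r : F} (hr : r ≠ 0)
    (m : ι → F) :
    ∑ x : ι → F, ψ (r * (x ⬝ᵥ x) + m ⬝ᵥ x)
      = (quadraticChar F r * quadraticGaussSum ψ) ^ Fintype.card ι
        * ψ (-(m ⬝ᵥ m) / (4 * r)) := by
  have hcoord : ∀ x : ι → F, r * (x ⬝ᵥ x) + m ⬝ᵥ x = ∑ i, (r * x i ^ 2 + m i * x i) :=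
      fun x ↦ by
    simp only [dotProduct, mul_sum, ← sum_add_distrib, sq]
  have hnorm : ∑ i, -m i ^ 2 / (4 * r) = -(m ⬝ᵥ m) / (4 * r) := by
    simp only [dotProduct, ← sum_div, ← sum_neg_distrib, sq]
  simp_rw [hcoord, ψ.sum_pi_map_sum_eq_prod_sum fun i y ↦ r * y ^ 2 + m i * y,
    sum_addChar_quadratic hF hψ hr, prod_mul_distrib, prod_const, card_univ,
    ← ψ.map_sum_eq_prod, hnorm, mul_pow]

lemma card_mul_sum_filter_eq {α : Type*} [Fintype α] (hψ : ψ ≠ 1) (g : α → F) (f : α → R)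
    (j : F) :
    (Fintype.card F : R) * ∑ x ∈ univ.filter (fun x ↦ g x = j), f x
      = ∑ r, ψ (r * j) * ∑ x, ψ (-r * g x) * f x := by
  simp_rw [mul_sum, ← mul_assoc, ← AddChar.map_add_eq_mul]
  rw [sum_comm, sum_filter]
  refine sum_congr rfl fun x _ ↦ ?_
  simp_rw [← sum_mul, show ∀ r, r * j + -r * g x = r * (j - g x) from fun r ↦ by ring,
    sum_addChar_mul hψ, sub_eq_zero, eq_comm (a := j)]
  split_ifs <;> simp

lemma card_mul_sum_sphere (hF : ringChar F ≠ 2) (hψ : ψ ≠ 1) (j : F) (m : ι → F) :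
    (Fintype.card F : R) * ∑ x ∈ univ.filter (fun x : ι → F ↦ x ⬝ᵥ x = j), ψ (m ⬝ᵥ x)
      = (if m = 0 then (Fintype.card F : R) ^ Fintype.card ι else 0)
        + (quadraticChar F (-1) * quadraticGaussSum ψ) ^ Fintype.card ι
          * ∑ r ∈ univ.filter (fun r : F ↦ r ≠ 0),
              (quadraticChar F r : R) ^ Fintype.card ι * ψ (j * r + m ⬝ᵥ m / (4 * r)) := by
  rw [card_mul_sum_filter_eq hψ, ← add_sum_erase _ _ (mem_univ 0), filter_ne']
  simp only [zero_mul, neg_zero, AddChar.map_zero_eq_one, one_mul, ← AddChar.map_add_eq_mul]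
  rw [sum_addChar_dotProduct hψ]
  congr 1
  rw [mul_sum]
  refine sum_congr rfl fun r hr ↦ ?_
  have hr0 : -r ≠ 0 := neg_ne_zero.mpr (ne_of_mem_erase hr)
  have hchar : (quadraticChar F (-r) : R) = quadraticChar F (-1) * quadraticChar F r := by
    rw [← Int.cast_mul, ← map_mul, neg_one_mul]
  rw [sum_addChar_quadraticForm hF hψ hr0, hchar, mul_neg, neg_div_neg_eq,
    AddChar.map_add_eq_mul, mul_comm j r]
  ring

end Pi

/-- Explicit Fourier decay of spheres: for the sphere `S_j ⊆ F_q^d`,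
`Ŝ_j(m) = q^{−1}δ₀(m) + q^{−d−1} η(−1)^d G₁^d Σ_{r≠0} η(r)^d χ(jr + ‖m‖/(4r))`. -/
theorem stmt_9 (F : Type) [Field F] [Fintype F] [DecidableEq F]
    (hq : ringChar F ≠ 2)
    (χ : AddChar F ℂ) (hχ : χ ≠ 1)
    (d : ℕ)
    (Shat : F → (Fin d → F) → ℂ)
    (hS : ∀ j m, Shat j m
      = ((Fintype.card F : ℂ) ^ d)⁻¹ *
          ∑ x ∈ Finset.univ.filter (fun x : Fin d → F => x ⬝ᵥ x = j),
            χ (-(m ⬝ᵥ x)))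
    (j : F) (m : Fin d → F) :
    Shat j m
      = (Fintype.card F : ℂ)⁻¹ * (if m = 0 then 1 else 0)
        + ((Fintype.card F : ℂ) ^ (d + 1))⁻¹
          * (quadraticChar F (-1) : ℂ) ^ d
          * (∑ t ∈ Finset.univ.filter (fun t : F => t ≠ 0),
              ((quadraticChar F t : ℂ)) * χ t) ^ d
          * ∑ r ∈ Finset.univ.filter (fun r : F => r ≠ 0),
              ((quadraticChar F r : ℂ)) ^ d * χ (j * r + (m ⬝ᵥ m) / (4 * r)) := by
  have hG : quadraticGaussSum χ
      = ∑ t ∈ Finset.univ.filter (fun t : F => t ≠ 0), (quadraticChar F t : ℂ) * χ t := by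
    rw [sum_filter_of_ne fun t _ ht ↦ ?_]
    · simp [gaussSum]
    · rintro rfl
      simp at ht
  have hsphere := card_mul_sum_sphere hq hχ j (-m)
  simp only [neg_dotProduct, dotProduct_neg, neg_neg, neg_eq_zero, Fintype.card_fin, hG]
    at hsphere
  have hq0 : (Fintype.card F : ℂ) ≠ 0 := Nat.cast_ne_zero.mpr Fintype.card_ne_zero
  rw [hS, ← inv_mul_cancel_left₀ hq0 (∑ x ∈ _, _), hsphere]
  generalize (∑ t ∈ Finset.univ.filter (fun t : F => t ≠ 0), (quadraticChar F t : ℂ) * χ t) = G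
  generalize (∑ r ∈ Finset.univ.filter (fun r : F => r ≠ 0),
    (quadraticChar F r : ℂ) ^ d * χ (j * r + (m ⬝ᵥ m) / (4 * r))) = S
  split_ifs <;> field_simp <;> ring
end

section
/- Let q be an odd prime power and P ⊆ F_q^d × F_q^d. With N(P) = #{((x,y),(u,v)) ∈ P×P : ‖x−u‖ = ‖y−v‖}, one has N(P) = (1/q + (q−1)/q^{d+1})|P|² + q^{3d−1}(q−1) Σ_{(m,m')≠(0,0), ‖m‖=‖m'‖} |P̂(m,m')|² − q^{3d−1} Σ_{‖m‖≠‖m'‖} |P̂(m,m')|². -/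
set_option linter.unusedSectionVars false
set_option linter.unusedVariables false
set_option maxHeartbeats 1000000

open Finset Matrix

section auxStmt11

variable {F : Type} [Field F] [Fintype F] [DecidableEq F]

private lemma stmt11_map_sum {ι : Type*} (χ : AddChar F ℂ) (s : Finset ι) (f : ι → F) :
    χ (∑ i ∈ s, f i) = ∏ i ∈ s, χ (f i) := by
  induction s using Finset.cons_induction with
  | empty => simp
  | cons a s ha ih => rw [Finset.sum_cons, Finset.prod_cons, AddChar.map_add_eq_mul, ih]

private lemma stmt11_char_sum {χ : AddChar F ℂ} (hχ : χ ≠ 1) (a : F) :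
    ∑ s : F, χ (s * a) = if a = 0 then (Fintype.card F : ℂ) else 0 := by
  rw [AddChar.sum_mulShift a (AddChar.IsPrimitive.of_ne_one hχ)]
  split_ifs <;> simp

private lemma stmt11_vec_orth {χ : AddChar F ℂ} (hχ : χ ≠ 1) {d : ℕ} (m : Fin d → F) :
    ∑ u : Fin d → F, χ (u ⬝ᵥ m) = if m = 0 then (Fintype.card F : ℂ) ^ d else 0 := by
  have h1 : ∀ u : Fin d → F, χ (u ⬝ᵥ m) = ∏ i, χ (u i * m i) := fun u =>
    stmt11_map_sum χ univ fun i => u i * m i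
  simp_rw [h1]
  rw [← Fintype.prod_sum fun (i : Fin d) (t : F) => χ (t * m i)]
  by_cases h : m = 0
  · subst h
    simp [stmt11_char_sum hχ]
  · obtain ⟨i, hi⟩ := Function.ne_iff.mp h
    rw [if_neg h]
    refine Finset.prod_eq_zero (Finset.mem_univ i) ?_
    rw [stmt11_char_sum hχ, if_neg (by simpa using hi)]

private lemma stmt11_translate {d : ℕ} (c : Fin d → F) (f : (Fin d → F) → ℂ) :
    ∑ u : Fin d → F, f (u + c) = ∑ u : Fin d → F, f u :=
  Fintype.sum_equiv (Equiv.addRight c) _ _ fun u => rfl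

private lemma stmt11_T1 (hq : ringChar F ≠ 2) (χ : AddChar F ℂ) {d : ℕ}
    (s : F) (hs : s ≠ 0) (m : Fin d → F) :
    (∑ u : Fin d → F, χ (s * (u ⬝ᵥ u) + u ⬝ᵥ m))
      = χ (-((m ⬝ᵥ m) * (4 * s)⁻¹)) * ∑ u : Fin d → F, χ (s * (u ⬝ᵥ u) + u ⬝ᵥ 0) := by
  have two_ne : (2:F) ≠ 0 := Ring.two_ne_zero hq
  rw [← stmt11_translate ((-(2*s)⁻¹) • m) (fun u => χ (s * (u ⬝ᵥ u) + u ⬝ᵥ m)), Finset.mul_sum]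
  refine Finset.sum_congr rfl fun u _ => ?_
  rw [← AddChar.map_add_eq_mul]
  congr 1
  have hc : m ⬝ᵥ u = u ⬝ᵥ m := dotProduct_comm m u
  simp only [add_dotProduct, dotProduct_add, smul_dotProduct,
    dotProduct_smul, dotProduct_zero, smul_eq_mul, hc]
  have h2s : (2:F) * s ≠ 0 := mul_ne_zero two_ne hs
  have h1 : (2*s) * (2*s)⁻¹ = 1 := mul_inv_cancel₀ h2s
  have h4 : (4*s) * (s * ((2*s)⁻¹ * (2*s)⁻¹)) = 1 := by
    have h : (4*s) * (s * ((2*s)⁻¹ * (2*s)⁻¹)) = ((2*s) * (2*s)⁻¹) * ((2*s) * (2*s)⁻¹) := by ring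
    rw [h, h1, mul_one]
  have hr : (4*s)⁻¹ = s * ((2*s)⁻¹ * (2*s)⁻¹) := inv_eq_of_mul_eq_one_right h4
  rw [hr]
  linear_combination ((m ⬝ᵥ m)*(2*s)⁻¹ - (u ⬝ᵥ m)) * h1

private lemma stmt11_T2 (hq : ringChar F ≠ 2) {χ : AddChar F ℂ} (hχ : χ ≠ 1) {d : ℕ}
    (s : F) (hs : s ≠ 0) :
    (∑ u : Fin d → F, χ (s * (u ⬝ᵥ u) + u ⬝ᵥ 0)) *
      (∑ u : Fin d → F, χ (-s * (u ⬝ᵥ u) + u ⬝ᵥ 0)) = (Fintype.card F : ℂ) ^ d := by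
  have two_ne : (2:F) ≠ 0 := Ring.two_ne_zero hq
  rw [Finset.sum_mul_sum]
  have step1 : ∀ u : Fin d → F,
      (∑ v : Fin d → F, χ (s * (u ⬝ᵥ u) + u ⬝ᵥ 0) * χ (-s * (v ⬝ᵥ v) + v ⬝ᵥ 0))
        = ∑ w : Fin d → F, χ (-s * (w ⬝ᵥ w)) * χ (u ⬝ᵥ ((-(2*s)) • w)) := by
    intro u
    rw [← stmt11_translate u (fun v => χ (s * (u ⬝ᵥ u) + u ⬝ᵥ 0) * χ (-s * (v ⬝ᵥ v) + v ⬝ᵥ 0))]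
    refine Finset.sum_congr rfl fun w _ => ?_
    rw [← AddChar.map_add_eq_mul, ← AddChar.map_add_eq_mul]
    congr 1
    have hc : w ⬝ᵥ u = u ⬝ᵥ w := dotProduct_comm w u
    simp only [add_dotProduct, dotProduct_add, smul_dotProduct,
      dotProduct_smul, dotProduct_zero, smul_eq_mul, hc]
    ring
  rw [Finset.sum_congr rfl fun u _ => step1 u, Finset.sum_comm]
  have step2 : ∀ w : Fin d → F,
      (∑ u : Fin d → F, χ (-s * (w ⬝ᵥ w)) * χ (u ⬝ᵥ ((-(2*s)) • w)))
        = if w = 0 then (Fintype.card F : ℂ) ^ d else 0 := by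
    intro w
    rw [← Finset.mul_sum, stmt11_vec_orth hχ]
    by_cases hw : w = 0
    · subst hw; simp
    · rw [if_neg, if_neg hw, mul_zero]
      simp [smul_eq_zero, hw, hs, two_ne]
  rw [Finset.sum_congr rfl fun w _ => step2 w, Finset.sum_ite_eq' Finset.univ (0 : Fin d → F)]
  simp

private lemma stmt11_U (hq : ringChar F ≠ 2) (χ : AddChar F ℂ) {d : ℕ}
    (t : F) (ht : t ≠ 0) (z m : Fin d → F) :
    ∑ u : Fin d → F, χ (t * ((z - u) ⬝ᵥ (z - u)) + u ⬝ᵥ m)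
      = χ (z ⬝ᵥ m) * (χ (-((m ⬝ᵥ m) * (4*t)⁻¹)) *
          ∑ u : Fin d → F, χ (t * (u ⬝ᵥ u) + u ⬝ᵥ 0)) := by
  have h1 : ∑ u : Fin d → F, χ (t * ((z - u) ⬝ᵥ (z - u)) + u ⬝ᵥ m)
      = χ (z ⬝ᵥ m) * ∑ u : Fin d → F, χ (t * (u ⬝ᵥ u) + u ⬝ᵥ m) := by
    rw [← stmt11_translate z (fun u => χ (t * ((z - u) ⬝ᵥ (z - u)) + u ⬝ᵥ m)), Finset.mul_sum]
    refine Finset.sum_congr rfl fun w _ => ?_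
    rw [← AddChar.map_add_eq_mul]
    congr 1
    have h2 : z - (w + z) = -w := by abel
    rw [h2]
    simp only [neg_dotProduct, dotProduct_neg, neg_neg, add_dotProduct]
    ring
  rw [h1, stmt11_T1 hq χ t ht m]

private lemma stmt11_conj {χ : AddChar F ℂ} {d : ℕ}
    (P : Finset ((Fin d → F) × (Fin d → F)))
    (Phat : (Fin d → F) → (Fin d → F) → ℂ)
    (hP : ∀ m m', Phat m m'
      = ((Fintype.card F : ℂ) ^ (2 * d))⁻¹ *
          ∑ p ∈ P, χ (-(p.1 ⬝ᵥ m) - p.2 ⬝ᵥ m'))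
    (m m' : Fin d → F) :
    (Fintype.card F : ℂ) ^ (2*d) * (starRingEnd ℂ) (Phat m m')
      = ∑ p ∈ P, χ (p.1 ⬝ᵥ m + p.2 ⬝ᵥ m') := by
  have qne : (Fintype.card F : ℂ) ≠ 0 := Nat.cast_ne_zero.mpr Fintype.card_ne_zero
  rw [hP, _root_.map_mul, map_inv₀, map_pow, map_natCast, map_sum]
  have h : ∀ p : (Fin d → F) × (Fin d → F),
      (starRingEnd ℂ) (χ (-(p.1 ⬝ᵥ m) - p.2 ⬝ᵥ m')) = χ (p.1 ⬝ᵥ m + p.2 ⬝ᵥ m') := by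
    intro p
    rw [← AddChar.map_neg_eq_conj]
    congr 1; ring
  rw [Finset.sum_congr rfl fun p _ => h p, ← mul_assoc,
    mul_inv_cancel₀ (pow_ne_zero _ qne), one_mul]

private lemma stmt11_inv {χ : AddChar F ℂ} (hχ : χ ≠ 1) {d : ℕ}
    (P : Finset ((Fin d → F) × (Fin d → F)))
    (Phat : (Fin d → F) → (Fin d → F) → ℂ)
    (hP : ∀ m m', Phat m m'
      = ((Fintype.card F : ℂ) ^ (2 * d))⁻¹ *
          ∑ p ∈ P, χ (-(p.1 ⬝ᵥ m) - p.2 ⬝ᵥ m'))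
    (uv : (Fin d → F) × (Fin d → F)) :
    ∑ m : Fin d → F, ∑ m' : Fin d → F, Phat m m' * χ (uv.1 ⬝ᵥ m + uv.2 ⬝ᵥ m')
      = if uv ∈ P then 1 else 0 := by
  have qne : (Fintype.card F : ℂ) ≠ 0 := Nat.cast_ne_zero.mpr Fintype.card_ne_zero
  simp only [hP]
  have key : ∀ m : Fin d → F, ∀ m' : Fin d → F,
      (((Fintype.card F : ℂ) ^ (2 * d))⁻¹ * ∑ p ∈ P, χ (-(p.1 ⬝ᵥ m) - p.2 ⬝ᵥ m'))
          * χ (uv.1 ⬝ᵥ m + uv.2 ⬝ᵥ m')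
        = ((Fintype.card F : ℂ) ^ (2 * d))⁻¹ *
            ∑ p ∈ P, χ (m ⬝ᵥ (uv.1 - p.1) + m' ⬝ᵥ (uv.2 - p.2)) := by
    intro m m'
    rw [mul_assoc, Finset.sum_mul]
    congr 1
    refine Finset.sum_congr rfl fun p _ => ?_
    rw [← AddChar.map_add_eq_mul]
    congr 1
    simp only [dotProduct_sub]
    linear_combination (dotProduct_comm uv.1 m) + (dotProduct_comm uv.2 m')
      - (dotProduct_comm p.1 m) - (dotProduct_comm p.2 m')
  simp only [key]
  simp_rw [← Finset.mul_sum]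
  have swap : ∑ m : Fin d → F, ∑ m' : Fin d → F,
      ∑ p ∈ P, χ (m ⬝ᵥ (uv.1 - p.1) + m' ⬝ᵥ (uv.2 - p.2))
      = ∑ p ∈ P, (∑ m : Fin d → F, χ (m ⬝ᵥ (uv.1 - p.1))) *
          (∑ m' : Fin d → F, χ (m' ⬝ᵥ (uv.2 - p.2))) := by
    calc ∑ m : Fin d → F, ∑ m' : Fin d → F,
        ∑ p ∈ P, χ (m ⬝ᵥ (uv.1 - p.1) + m' ⬝ᵥ (uv.2 - p.2))
        = ∑ m : Fin d → F, ∑ p ∈ P,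
            ∑ m' : Fin d → F, χ (m ⬝ᵥ (uv.1 - p.1) + m' ⬝ᵥ (uv.2 - p.2)) :=
          Finset.sum_congr rfl fun m _ => Finset.sum_comm
      _ = ∑ p ∈ P, ∑ m : Fin d → F,
            ∑ m' : Fin d → F, χ (m ⬝ᵥ (uv.1 - p.1) + m' ⬝ᵥ (uv.2 - p.2)) :=
          Finset.sum_comm
      _ = ∑ p ∈ P, (∑ m : Fin d → F, χ (m ⬝ᵥ (uv.1 - p.1))) *
            (∑ m' : Fin d → F, χ (m' ⬝ᵥ (uv.2 - p.2))) := by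
          refine Finset.sum_congr rfl fun p _ => ?_
          rw [Finset.sum_mul_sum]
          exact Finset.sum_congr rfl fun a _ => Finset.sum_congr rfl fun b _ =>
            (AddChar.map_add_eq_mul χ _ _)
  rw [swap]
  have step : ∀ p ∈ P,
      (∑ m : Fin d → F, χ (m ⬝ᵥ (uv.1 - p.1))) *
          (∑ m' : Fin d → F, χ (m' ⬝ᵥ (uv.2 - p.2)))
        = if p = uv then (Fintype.card F : ℂ) ^ (2*d) else 0 := by
    intro p _
    rw [stmt11_vec_orth hχ, stmt11_vec_orth hχ]
    by_cases h1 : uv.1 - p.1 = 0 <;> by_cases h2 : uv.2 - p.2 = 0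
    · rw [if_pos h1, if_pos h2, if_pos, two_mul, pow_add]
      rw [sub_eq_zero] at h1 h2
      exact Prod.ext_iff.mpr ⟨h1.symm, h2.symm⟩
    · rw [if_pos h1, if_neg h2, mul_zero, if_neg]
      intro h; subst h; exact h2 (sub_self _)
    · rw [if_neg h1, zero_mul, if_neg]
      intro h; subst h; exact h1 (sub_self _)
    · rw [if_neg h1, zero_mul, if_neg]
      intro h; subst h; exact h1 (sub_self _)
  rw [Finset.sum_congr rfl step, Finset.sum_ite_eq' P uv fun _ => (Fintype.card F : ℂ) ^ (2*d)]
  by_cases h : uv ∈ P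
  · rw [if_pos h, if_pos h, inv_mul_cancel₀ (pow_ne_zero _ qne)]
  · rw [if_neg h, if_neg h, mul_zero]

private lemma stmt11_mulconj (z : ℂ) : z * (starRingEnd ℂ) z = ((‖z‖^2 : ℝ) : ℂ) := by
  rw [Complex.mul_conj, Complex.normSq_eq_norm_sq]

end auxStmt11

section mainStmt11
variable {F : Type} [Field F] [Fintype F] [DecidableEq F]

private lemma stmt11_main (hq : ringChar F ≠ 2) {χ : AddChar F ℂ} (hχ : χ ≠ 1) {d : ℕ}
    (P : Finset ((Fin d → F) × (Fin d → F)))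
    (Phat : (Fin d → F) → (Fin d → F) → ℂ)
    (hP : ∀ m m', Phat m m'
      = ((Fintype.card F : ℂ) ^ (2 * d))⁻¹ *
          ∑ p ∈ P, χ (-(p.1 ⬝ᵥ m) - p.2 ⬝ᵥ m'))
    (s : F) (hs : s ≠ 0) :
    ∑ p ∈ P ×ˢ P, χ (s * ((p.1.1 - p.2.1) ⬝ᵥ (p.1.1 - p.2.1)
        - (p.1.2 - p.2.2) ⬝ᵥ (p.1.2 - p.2.2)))
      = (Fintype.card F : ℂ)^(3*d) * ∑ m : Fin d → F, ∑ m' : Fin d → F,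
          ((‖Phat m m'‖^2 : ℝ) : ℂ) * χ ((m' ⬝ᵥ m' - m ⬝ᵥ m) * (4*s)⁻¹) := by
  have hns : -s ≠ 0 := neg_ne_zero.mpr hs
  have hx : ∀ x : (Fin d → F) × (Fin d → F),
      (∑ uv : (Fin d → F) × (Fin d → F), (if uv ∈ P then (1:ℂ) else 0) *
          χ (s * ((x.1 - uv.1) ⬝ᵥ (x.1 - uv.1) - (x.2 - uv.2) ⬝ᵥ (x.2 - uv.2))))
        = ∑ m : Fin d → F, ∑ m' : Fin d → F,
            (Phat m m' * (χ (-((m ⬝ᵥ m) * (4*s)⁻¹)) * χ (-((m' ⬝ᵥ m') * (4*(-s))⁻¹))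
              * ((∑ u : Fin d → F, χ (s * (u ⬝ᵥ u) + u ⬝ᵥ 0)) * (∑ u : Fin d → F, χ (-s * (u ⬝ᵥ u) + u ⬝ᵥ 0))))) * χ (x.1 ⬝ᵥ m + x.2 ⬝ᵥ m') := by
    intro x
    have e1 : ∀ uv : (Fin d → F) × (Fin d → F), (if uv ∈ P then (1:ℂ) else 0) *
        χ (s * ((x.1 - uv.1) ⬝ᵥ (x.1 - uv.1) - (x.2 - uv.2) ⬝ᵥ (x.2 - uv.2)))
        = ∑ m : Fin d → F, ∑ m' : Fin d → F, Phat m m' *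
            (χ (uv.1 ⬝ᵥ m + uv.2 ⬝ᵥ m') *
              χ (s * ((x.1 - uv.1) ⬝ᵥ (x.1 - uv.1) - (x.2 - uv.2) ⬝ᵥ (x.2 - uv.2)))) := by
      intro uv
      rw [← stmt11_inv hχ P Phat hP uv, Finset.sum_mul]
      refine Finset.sum_congr rfl fun m _ => ?_
      rw [Finset.sum_mul]
      exact Finset.sum_congr rfl fun m' _ => by ring
    rw [Finset.sum_congr rfl fun uv _ => e1 uv, Finset.sum_comm]
    refine Finset.sum_congr rfl fun m _ => ?_
    rw [Finset.sum_comm]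
    refine Finset.sum_congr rfl fun m' _ => ?_
    rw [← Finset.mul_sum]
    have core : ∑ uv : (Fin d → F) × (Fin d → F), χ (uv.1 ⬝ᵥ m + uv.2 ⬝ᵥ m') *
        χ (s * ((x.1 - uv.1) ⬝ᵥ (x.1 - uv.1) - (x.2 - uv.2) ⬝ᵥ (x.2 - uv.2)))
        = (∑ u : Fin d → F, χ (s * ((x.1 - u) ⬝ᵥ (x.1 - u)) + u ⬝ᵥ m)) *
          (∑ v : Fin d → F, χ (-s * ((x.2 - v) ⬝ᵥ (x.2 - v)) + v ⬝ᵥ m')) := by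
      rw [Finset.sum_mul_sum, Fintype.sum_prod_type]
      refine Finset.sum_congr rfl fun u _ => Finset.sum_congr rfl fun v _ => ?_
      rw [← AddChar.map_add_eq_mul, ← AddChar.map_add_eq_mul]
      congr 1
      ring
    rw [core, stmt11_U hq χ s hs x.1 m, stmt11_U hq χ (-s) hns x.2 m']
    rw [AddChar.map_add_eq_mul]
    ring
  calc ∑ p ∈ P ×ˢ P, χ (s * ((p.1.1 - p.2.1) ⬝ᵥ (p.1.1 - p.2.1)
        - (p.1.2 - p.2.2) ⬝ᵥ (p.1.2 - p.2.2)))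
      = ∑ x ∈ P, ∑ y ∈ P, χ (s * ((x.1 - y.1) ⬝ᵥ (x.1 - y.1)
          - (x.2 - y.2) ⬝ᵥ (x.2 - y.2))) := by rw [Finset.sum_product]
    _ = ∑ x ∈ P, ∑ uv : (Fin d → F) × (Fin d → F), (if uv ∈ P then (1:ℂ) else 0) *
          χ (s * ((x.1 - uv.1) ⬝ᵥ (x.1 - uv.1) - (x.2 - uv.2) ⬝ᵥ (x.2 - uv.2))) := by
        refine Finset.sum_congr rfl fun x _ => ?_
        symm
        simp only [ite_mul, one_mul, zero_mul]
        rw [Finset.sum_ite_mem, Finset.univ_inter]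
    _ = ∑ x ∈ P, ∑ m : Fin d → F, ∑ m' : Fin d → F,
          (Phat m m' * (χ (-((m ⬝ᵥ m) * (4*s)⁻¹)) * χ (-((m' ⬝ᵥ m') * (4*(-s))⁻¹))
            * ((∑ u : Fin d → F, χ (s * (u ⬝ᵥ u) + u ⬝ᵥ 0)) * (∑ u : Fin d → F, χ (-s * (u ⬝ᵥ u) + u ⬝ᵥ 0))))) * χ (x.1 ⬝ᵥ m + x.2 ⬝ᵥ m') :=
        Finset.sum_congr rfl fun x _ => hx x
    _ = ∑ m : Fin d → F, ∑ m' : Fin d → F,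
          (Phat m m' * (χ (-((m ⬝ᵥ m) * (4*s)⁻¹)) * χ (-((m' ⬝ᵥ m') * (4*(-s))⁻¹))
            * ((∑ u : Fin d → F, χ (s * (u ⬝ᵥ u) + u ⬝ᵥ 0)) * (∑ u : Fin d → F, χ (-s * (u ⬝ᵥ u) + u ⬝ᵥ 0))))) * ∑ x ∈ P, χ (x.1 ⬝ᵥ m + x.2 ⬝ᵥ m') := by
        rw [Finset.sum_comm]
        refine Finset.sum_congr rfl fun m _ => ?_
        rw [Finset.sum_comm]
        refine Finset.sum_congr rfl fun m' _ => ?_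
        rw [← Finset.mul_sum]
    _ = (Fintype.card F : ℂ)^(3*d) * ∑ m : Fin d → F, ∑ m' : Fin d → F,
          ((‖Phat m m'‖^2 : ℝ) : ℂ) * χ ((m' ⬝ᵥ m' - m ⬝ᵥ m) * (4*s)⁻¹) := by
        conv_rhs => rw [Finset.mul_sum]
        refine Finset.sum_congr rfl fun m _ => ?_
        conv_rhs => rw [Finset.mul_sum]
        refine Finset.sum_congr rfl fun m' _ => ?_
        rw [← stmt11_conj P Phat hP m m']
        have harg : (-((m ⬝ᵥ m) * (4*s)⁻¹)) + (-((m' ⬝ᵥ m') * (4*(-s))⁻¹))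
            = (m' ⬝ᵥ m' - m ⬝ᵥ m) * (4*s)⁻¹ := by
          rw [mul_neg, inv_neg]
          ring
        calc (Phat m m' * (χ (-((m ⬝ᵥ m) * (4*s)⁻¹)) * χ (-((m' ⬝ᵥ m') * (4*(-s))⁻¹))
              * ((∑ u : Fin d → F, χ (s * (u ⬝ᵥ u) + u ⬝ᵥ 0)) * (∑ u : Fin d → F, χ (-s * (u ⬝ᵥ u) + u ⬝ᵥ 0))))) * ((Fintype.card F : ℂ) ^ (2*d) * (starRingEnd ℂ) (Phat m m'))
            = (Phat m m' * (starRingEnd ℂ) (Phat m m')) *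
                (χ (-((m ⬝ᵥ m) * (4*s)⁻¹)) * χ (-((m' ⬝ᵥ m') * (4*(-s))⁻¹))) *
                ((∑ u : Fin d → F, χ (s * (u ⬝ᵥ u) + u ⬝ᵥ 0)) * (∑ u : Fin d → F, χ (-s * (u ⬝ᵥ u) + u ⬝ᵥ 0))) * (Fintype.card F : ℂ) ^ (2*d) := by ring
          _ = ((‖Phat m m'‖^2 : ℝ) : ℂ) * χ ((m' ⬝ᵥ m' - m ⬝ᵥ m) * (4*s)⁻¹) *
                ((Fintype.card F : ℂ) ^ d * (Fintype.card F : ℂ) ^ (2*d)) := by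
              rw [stmt11_mulconj, ← AddChar.map_add_eq_mul, harg,
                stmt11_T2 hq hχ s hs]
              ring
          _ = (Fintype.card F : ℂ)^(3*d) *
                (((‖Phat m m'‖^2 : ℝ) : ℂ) * χ ((m' ⬝ᵥ m' - m ⬝ᵥ m) * (4*s)⁻¹)) := by
              rw [← pow_add]
              have h3 : d + 2*d = 3*d := by omega
              rw [h3]
              ring

end mainStmt11

section finalStmt11
variable {F : Type} [Field F] [Fintype F] [DecidableEq F]

private lemma stmt11_arith (q Pc A B Q : ℂ) (hq : q ≠ 0) (hQ : Q ≠ 0) :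
    q⁻¹ * (Pc^2 + Q^3 * ((q - 1) * (((Q^2)⁻¹ * ((Q^2)⁻¹ * Pc^2)) + A) - B))
      = (1/q + (q-1)/(Q * q)) * Pc^2 + (Q^3/q) * (q-1) * A - (Q^3/q) * B := by
  field_simp
  ring

private lemma stmt11_ssum {χ : AddChar F ℂ} (hχ : χ ≠ 1) (hq : ringChar F ≠ 2) (c : F) :
    ∑ s ∈ Finset.univ.erase (0:F), χ (c * (4*s)⁻¹)
      = (if c = 0 then (Fintype.card F : ℂ) else 0) - 1 := by
  have two_ne : (2:F) ≠ 0 := Ring.two_ne_zero hq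
  have four_ne : (4:F) ≠ 0 := by
    have h : (4:F) = 2*2 := by norm_num
    rw [h]; exact mul_ne_zero two_ne two_ne
  have hbij : ∑ s ∈ Finset.univ.erase (0:F), χ (c * (4*s)⁻¹)
      = ∑ t ∈ Finset.univ.erase (0:F), χ (c * t) := by
    refine Finset.sum_nbij' (fun s => (4*s)⁻¹) (fun t => (4*t)⁻¹) ?_ ?_ ?_ ?_ ?_
    · intro a ha
      simp only [Finset.mem_erase, Finset.mem_univ, and_true] at ha ⊢
      exact inv_ne_zero (mul_ne_zero four_ne ha)
    · intro a ha
      simp only [Finset.mem_erase, Finset.mem_univ, and_true] at ha ⊢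
      exact inv_ne_zero (mul_ne_zero four_ne ha)
    · intro a ha
      simp only [Finset.mem_erase, Finset.mem_univ, and_true] at ha
      field_simp
    · intro a ha
      simp only [Finset.mem_erase, Finset.mem_univ, and_true] at ha
      field_simp
    · intro a ha; rfl
  rw [hbij]
  have hsplit : χ (c * 0) + ∑ t ∈ Finset.univ.erase (0:F), χ (c * t)
      = ∑ t : F, χ (c * t) :=
    Finset.add_sum_erase Finset.univ (fun t => χ (c * t)) (Finset.mem_univ (0:F))
  have hall : ∑ t : F, χ (c * t) = if c = 0 then (Fintype.card F : ℂ) else 0 := by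
    rw [← stmt11_char_sum hχ c]
    exact Finset.sum_congr rfl fun t _ => by rw [mul_comm]
  have : χ (c * 0) = 1 := by rw [mul_zero, AddChar.map_zero_eq_one]
  rw [this] at hsplit
  rw [← hall, ← hsplit]
  ring

end finalStmt11

/-- For general `P ⊆ F_q^d × F_q^d`, with
`N(P) = #{((x,y),(u,v)) ∈ P×P : ‖x−u‖ = ‖y−v‖}`,
`N(P) = (1/q + (q−1)/q^{d+1})|P|²
  + q^{3d−1} (q−1) Σ_{(m,m')≠(0,0), ‖m‖=‖m'‖} |P̂(m,m')|²
  − q^{3d−1} Σ_{‖m‖≠‖m'‖} |P̂(m,m')|²`. -/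
theorem stmt_11 (F : Type) [Field F] [Fintype F] [DecidableEq F]
    (hq : ringChar F ≠ 2)
    (χ : AddChar F ℂ) (hχ : χ ≠ 1)
    (d : ℕ) (hd : 0 < d)
    (P : Finset ((Fin d → F) × (Fin d → F)))
    (Phat : (Fin d → F) → (Fin d → F) → ℂ)
    (hP : ∀ m m', Phat m m'
      = ((Fintype.card F : ℂ) ^ (2 * d))⁻¹ *
          ∑ p ∈ P, χ (-(p.1 ⬝ᵥ m) - p.2 ⬝ᵥ m')) :
    (((P ×ˢ P).filter
        (fun p => (p.1.1 - p.2.1) ⬝ᵥ (p.1.1 - p.2.1)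
          = (p.1.2 - p.2.2) ⬝ᵥ (p.1.2 - p.2.2))).card : ℂ)
      = (1 / (Fintype.card F : ℂ)
          + ((Fintype.card F : ℂ) - 1) / (Fintype.card F : ℂ) ^ (d + 1))
            * (P.card : ℂ) ^ 2
        + (Fintype.card F : ℂ) ^ (3 * d - 1) * ((Fintype.card F : ℂ) - 1) *
            ((∑ p ∈ Finset.univ.filter
                (fun p : (Fin d → F) × (Fin d → F) =>
                  p ≠ 0 ∧ p.1 ⬝ᵥ p.1 = p.2 ⬝ᵥ p.2),
              ‖Phat p.1 p.2‖ ^ 2 : ℝ) : ℂ)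
        - (Fintype.card F : ℂ) ^ (3 * d - 1) *
            ((∑ p ∈ Finset.univ.filter
                (fun p : (Fin d → F) × (Fin d → F) => p.1 ⬝ᵥ p.1 ≠ p.2 ⬝ᵥ p.2),
              ‖Phat p.1 p.2‖ ^ 2 : ℝ) : ℂ) := by
  classical
  have qne : (Fintype.card F : ℂ) ≠ 0 := Nat.cast_ne_zero.mpr Fintype.card_ne_zero
  have Qne : (Fintype.card F : ℂ) ^ d ≠ 0 := pow_ne_zero _ qne
  -- Step A: express the count via characters
  have hdelta : ∀ a b : F, (if a = b then (1:ℂ) else 0)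
      = (Fintype.card F : ℂ)⁻¹ * ∑ s : F, χ (s * (a - b)) := by
    intro a b
    rw [stmt11_char_sum hχ]
    by_cases h : a = b
    · rw [if_pos h, if_pos (sub_eq_zero_of_eq h), inv_mul_cancel₀ qne]
    · rw [if_neg h, if_neg (fun hc => h (sub_eq_zero.mp hc)), mul_zero]
  have hcard : (((P ×ˢ P).filter
        (fun p => (p.1.1 - p.2.1) ⬝ᵥ (p.1.1 - p.2.1)
          = (p.1.2 - p.2.2) ⬝ᵥ (p.1.2 - p.2.2))).card : ℂ)
      = (Fintype.card F : ℂ)⁻¹ * ∑ s : F, ∑ p ∈ P ×ˢ P,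
          χ (s * ((p.1.1 - p.2.1) ⬝ᵥ (p.1.1 - p.2.1)
            - (p.1.2 - p.2.2) ⬝ᵥ (p.1.2 - p.2.2))) := by
    rw [← Finset.sum_boole, Finset.sum_congr rfl fun p _ => hdelta _ _, ← Finset.mul_sum]
    congr 1
    exact Finset.sum_comm
  -- Step B: split off s = 0
  have hsplit : ∑ s : F, ∑ p ∈ P ×ˢ P,
        χ (s * ((p.1.1 - p.2.1) ⬝ᵥ (p.1.1 - p.2.1)
          - (p.1.2 - p.2.2) ⬝ᵥ (p.1.2 - p.2.2)))
      = (P.card : ℂ)^2 + ∑ s ∈ Finset.univ.erase (0:F), ∑ p ∈ P ×ˢ P,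
          χ (s * ((p.1.1 - p.2.1) ⬝ᵥ (p.1.1 - p.2.1)
            - (p.1.2 - p.2.2) ⬝ᵥ (p.1.2 - p.2.2))) := by
    rw [← Finset.add_sum_erase _ _ (Finset.mem_univ (0:F))]
    congr 1
    simp only [zero_mul, AddChar.map_zero_eq_one]
    rw [Finset.sum_const, Finset.card_product]
    push_cast
    ring
  -- Step C: evaluate the nonzero s terms
  have hmain : ∑ s ∈ Finset.univ.erase (0:F), ∑ p ∈ P ×ˢ P,
        χ (s * ((p.1.1 - p.2.1) ⬝ᵥ (p.1.1 - p.2.1)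
          - (p.1.2 - p.2.2) ⬝ᵥ (p.1.2 - p.2.2)))
      = (Fintype.card F : ℂ)^(3*d) * ∑ m : Fin d → F, ∑ m' : Fin d → F,
          ((‖Phat m m'‖^2 : ℝ) : ℂ) *
            ((if (m' ⬝ᵥ m' - m ⬝ᵥ m : F) = 0 then (Fintype.card F : ℂ) else 0) - 1) := by
    have h1 : ∀ s ∈ Finset.univ.erase (0:F), ∑ p ∈ P ×ˢ P,
          χ (s * ((p.1.1 - p.2.1) ⬝ᵥ (p.1.1 - p.2.1)
            - (p.1.2 - p.2.2) ⬝ᵥ (p.1.2 - p.2.2)))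
        = (Fintype.card F : ℂ)^(3*d) * ∑ m : Fin d → F, ∑ m' : Fin d → F,
            ((‖Phat m m'‖^2 : ℝ) : ℂ) * χ ((m' ⬝ᵥ m' - m ⬝ᵥ m) * (4*s)⁻¹) := by
      intro s hs
      exact stmt11_main hq hχ P Phat hP s (Finset.mem_erase.mp hs).1
    rw [Finset.sum_congr rfl h1, ← Finset.mul_sum]
    congr 1
    rw [Finset.sum_comm]
    refine Finset.sum_congr rfl fun m _ => ?_
    rw [Finset.sum_comm]
    refine Finset.sum_congr rfl fun m' _ => ?_
    rw [← Finset.mul_sum, stmt11_ssum hχ hq]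
  -- Identify the double sum with filtered pair sums
  have hpair : ∑ m : Fin d → F, ∑ m' : Fin d → F,
        ((‖Phat m m'‖^2 : ℝ) : ℂ) *
          ((if (m' ⬝ᵥ m' - m ⬝ᵥ m : F) = 0 then (Fintype.card F : ℂ) else 0) - 1)
      = ((Fintype.card F : ℂ) - 1) *
          ((((Fintype.card F : ℂ) ^ (2*d))⁻¹ * (((Fintype.card F : ℂ) ^ (2*d))⁻¹ *
            (P.card : ℂ)^2)) +
           ∑ p ∈ Finset.univ.filter
              (fun p : (Fin d → F) × (Fin d → F) => p ≠ 0 ∧ p.1 ⬝ᵥ p.1 = p.2 ⬝ᵥ p.2),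
            ((‖Phat p.1 p.2‖^2 : ℝ) : ℂ))
        - ∑ p ∈ Finset.univ.filter
            (fun p : (Fin d → F) × (Fin d → F) => p.1 ⬝ᵥ p.1 ≠ p.2 ⬝ᵥ p.2),
            ((‖Phat p.1 p.2‖^2 : ℝ) : ℂ) := by
    have hpt : ∑ p : (Fin d → F) × (Fin d → F),
        (((‖Phat p.1 p.2‖^2 : ℝ) : ℂ) *
          ((if (p.2 ⬝ᵥ p.2 - p.1 ⬝ᵥ p.1 : F) = 0 then (Fintype.card F : ℂ) else 0) - 1))
        = ∑ m : Fin d → F, ∑ m' : Fin d → F,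
            ((‖Phat m m'‖^2 : ℝ) : ℂ) *
              ((if (m' ⬝ᵥ m' - m ⬝ᵥ m : F) = 0 then (Fintype.card F : ℂ) else 0) - 1) :=
      Fintype.sum_prod_type _
    rw [← hpt]
    have h2 : ∀ p : (Fin d → F) × (Fin d → F),
        ((‖Phat p.1 p.2‖^2 : ℝ) : ℂ) *
          ((if (p.2 ⬝ᵥ p.2 - p.1 ⬝ᵥ p.1 : F) = 0 then (Fintype.card F : ℂ) else 0) - 1)
        = if p.1 ⬝ᵥ p.1 = p.2 ⬝ᵥ p.2
            then ((‖Phat p.1 p.2‖^2 : ℝ) : ℂ) * ((Fintype.card F : ℂ) - 1)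
            else -((‖Phat p.1 p.2‖^2 : ℝ) : ℂ) := by
      intro p
      by_cases h : (p.1 ⬝ᵥ p.1 : F) = p.2 ⬝ᵥ p.2
      · rw [if_pos h, if_pos (by rw [h, sub_self])]
      · rw [if_neg h, if_neg (fun hc => h (by linear_combination -hc)), mul_comm]
        ring
    rw [Finset.sum_congr rfl fun p _ => h2 p, Finset.sum_ite]
    have hfil : Finset.univ.filter
          (fun p : (Fin d → F) × (Fin d → F) => ¬ p.1 ⬝ᵥ p.1 = p.2 ⬝ᵥ p.2)
        = Finset.univ.filter
          (fun p : (Fin d → F) × (Fin d → F) => p.1 ⬝ᵥ p.1 ≠ p.2 ⬝ᵥ p.2) := rfl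
    rw [hfil]
    have hins : Finset.univ.filter
          (fun p : (Fin d → F) × (Fin d → F) => p.1 ⬝ᵥ p.1 = p.2 ⬝ᵥ p.2)
        = insert (0 : (Fin d → F) × (Fin d → F))
            (Finset.univ.filter
              (fun p : (Fin d → F) × (Fin d → F) => p ≠ 0 ∧ p.1 ⬝ᵥ p.1 = p.2 ⬝ᵥ p.2)) := by
      ext p
      simp only [Finset.mem_filter, Finset.mem_univ, true_and, Finset.mem_insert]
      constructor
      · intro h
        by_cases hp : p = 0
        · exact Or.inl hp
        · exact Or.inr ⟨hp, h⟩
      · rintro (rfl | ⟨-, h⟩)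
        · simp
        · exact h
    rw [hins, Finset.sum_insert (by simp), Finset.sum_neg_distrib]
    have h00 : ((‖Phat (0 : (Fin d → F) × (Fin d → F)).1
          (0 : (Fin d → F) × (Fin d → F)).2‖^2 : ℝ) : ℂ)
        = ((Fintype.card F : ℂ) ^ (2*d))⁻¹ * (((Fintype.card F : ℂ) ^ (2*d))⁻¹ *
            (P.card : ℂ)^2) := by
      have hp00 : Phat (0 : Fin d → F) (0 : Fin d → F)
          = ((Fintype.card F : ℂ) ^ (2 * d))⁻¹ * (P.card : ℂ) := by
        rw [hP]
        congr 1
        have : ∀ p ∈ P, χ (-((p : (Fin d → F) × (Fin d → F)).1 ⬝ᵥ (0 : Fin d → F))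
            - p.2 ⬝ᵥ (0 : Fin d → F)) = 1 := by
          intro p _
          simp [dotProduct_zero]
        rw [Finset.sum_congr rfl this, Finset.sum_const, nsmul_eq_mul, mul_one]
      show ((‖Phat (0 : Fin d → F) (0 : Fin d → F)‖^2 : ℝ) : ℂ) = _
      rw [← stmt11_mulconj, hp00]
      rw [_root_.map_mul, map_inv₀, map_pow, map_natCast, map_natCast]
      ring
    rw [h00, ← Finset.sum_mul]
    ring
  -- power bookkeeping
  have e2 : (Fintype.card F : ℂ) ^ (2*d) = ((Fintype.card F : ℂ) ^ d)^2 := by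
    rw [mul_comm 2 d, pow_mul]
  have e3 : (Fintype.card F : ℂ) ^ (3*d) = ((Fintype.card F : ℂ) ^ d)^3 := by
    rw [mul_comm 3 d, pow_mul]
  have ed1 : (Fintype.card F : ℂ) ^ (d+1) = (Fintype.card F : ℂ) ^ d * (Fintype.card F : ℂ) :=
    pow_succ _ _
  have e31 : (Fintype.card F : ℂ) ^ (3*d-1)
      = ((Fintype.card F : ℂ) ^ d)^3 / (Fintype.card F : ℂ) := by
    have h31 : 3*d - 1 + 1 = 3*d := by omega
    rw [eq_div_iff qne, ← pow_succ, h31, mul_comm 3 d, pow_mul]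
  rw [hcard, hsplit, hmain, hpair, Complex.ofReal_sum, Complex.ofReal_sum]
  simp only [e2, e3, ed1, e31]
  exact stmt11_arith _ _ _ _ _ qne Qne
end

section
/- Let q be an odd prime power and P ⊆ F_q^d × F_q^d. Then q^{3d−1}(q−1) Σ_{(m,m')≠(0,0), ‖m‖=‖m'‖} |P̂(m,m')|² ≤ C·q^d·|P| for some absolute constant C. -/
open Finset Matrix

lemma aux_sum_dot {F : Type} [Field F] [Fintype F] [DecidableEq F]
    (χ : AddChar F ℂ) (hχ : χ ≠ 1) {d : ℕ} (v : Fin d → F) (hv : v ≠ 0) :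
    ∑ m : Fin d → F, χ (v ⬝ᵥ m) = 0 := by
  classical
  let f : (Fin d → F) →+ F :=
    { toFun := fun m => v ⬝ᵥ m
      map_zero' := by simp
      map_add' := fun a b => by simp [dotProduct_add] }
  let ψ : AddChar (Fin d → F) ℂ := χ.compAddMonoidHom f
  have hψ : ψ ≠ 0 := by
    rw [← AddChar.one_eq_zero, AddChar.ne_one_iff]
    obtain ⟨a, ha⟩ := AddChar.ne_one_iff.mp hχ
    obtain ⟨i, hi⟩ := Function.ne_iff.mp hv
    refine ⟨Pi.single i ((v i)⁻¹ * a), ?_⟩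
    have : v ⬝ᵥ Pi.single i ((v i)⁻¹ * a) = a := by
      rw [dotProduct_single, ← mul_assoc, mul_inv_cancel₀ hi, one_mul]
    simpa [ψ, f, AddChar.compAddMonoidHom_apply, this] using ha
  have := AddChar.sum_eq_zero_iff_ne_zero.mpr hψ
  simpa [ψ, f, AddChar.compAddMonoidHom_apply] using this

lemma aux_plancherel {F : Type} [Field F] [Fintype F] [DecidableEq F]
    (χ : AddChar F ℂ) (hχ : χ ≠ 1) {d : ℕ}
    (P : Finset ((Fin d → F) × (Fin d → F))) :
    ∑ mm' : (Fin d → F) × (Fin d → F),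
      ‖∑ p ∈ P, χ (-(p.1 ⬝ᵥ mm'.1) - p.2 ⬝ᵥ mm'.2)‖ ^ 2
      = P.card * (Fintype.card F : ℝ) ^ (2 * d) := by
  classical
  set S : ((Fin d → F) × (Fin d → F)) → ℂ :=
    fun mm' => ∑ p ∈ P, χ (-(p.1 ⬝ᵥ mm'.1) - p.2 ⬝ᵥ mm'.2) with hS
  have key : ∑ mm' : (Fin d → F) × (Fin d → F), S mm' * (starRingEnd ℂ) (S mm')
      = (P.card : ℂ) * (Fintype.card F : ℂ) ^ (2 * d) := by
    have expand : ∀ mm' : (Fin d → F) × (Fin d → F),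
        S mm' * (starRingEnd ℂ) (S mm')
        = ∑ p ∈ P, ∑ p' ∈ P,
            χ ((p'.1 - p.1) ⬝ᵥ mm'.1) * χ ((p'.2 - p.2) ⬝ᵥ mm'.2) := by
      intro mm'
      rw [hS, map_sum, Finset.sum_mul_sum]
      refine Finset.sum_congr rfl fun p _ => Finset.sum_congr rfl fun p' _ => ?_
      rw [← AddChar.inv_apply_eq_conj, ← AddChar.map_neg_eq_inv, ← AddChar.map_add_eq_mul,
        ← AddChar.map_add_eq_mul]
      congr 1
      simp only [sub_dotProduct]
      ring
    calc ∑ mm' : (Fin d → F) × (Fin d → F), S mm' * (starRingEnd ℂ) (S mm')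
        = ∑ p ∈ P, ∑ p' ∈ P, ∑ mm' : (Fin d → F) × (Fin d → F),
            χ ((p'.1 - p.1) ⬝ᵥ mm'.1) * χ ((p'.2 - p.2) ⬝ᵥ mm'.2) := by
          simp_rw [expand]; rw [Finset.sum_comm]; congr 1; ext p; rw [Finset.sum_comm]
      _ = ∑ p ∈ P, ∑ p' ∈ P,
            (if p' = p then ((Fintype.card F : ℂ) ^ (2 * d)) else 0) := by
          refine Finset.sum_congr rfl fun p _ => Finset.sum_congr rfl fun p' _ => ?_
          rw [Fintype.sum_prod_type]
          dsimp only
          rw [← Finset.sum_mul_sum]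
          by_cases h : p' = p
          · subst h
            simp [AddChar.map_zero_eq_one, Finset.card_univ, two_mul, pow_add]
          · rw [if_neg h]
            have hne : p'.1 - p.1 ≠ 0 ∨ p'.2 - p.2 ≠ 0 := by
              by_contra hc
              push_neg at hc
              exact h (Prod.ext (sub_eq_zero.mp hc.1) (sub_eq_zero.mp hc.2))
            rcases hne with h1 | h1
            · rw [aux_sum_dot χ hχ _ h1, zero_mul]
            · rw [aux_sum_dot χ hχ _ h1, mul_zero]
      _ = (P.card : ℂ) * (Fintype.card F : ℂ) ^ (2 * d) := by
          simp [Finset.sum_ite_eq, Finset.mul_sum]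
  have : ((∑ mm' : (Fin d → F) × (Fin d → F), ‖S mm'‖ ^ 2 : ℝ) : ℂ)
      = (P.card : ℂ) * (Fintype.card F : ℂ) ^ (2 * d) := by
    rw [← key]; push_cast; simp_rw [← Complex.mul_conj']
  exact_mod_cast this

/-- For `q` an odd prime power and `P ⊆ F_q^d × F_q^d`,
`q^{3d−1}(q−1) Σ_{(m,m')≠(0,0), ‖m‖=‖m'‖} |P̂(m,m')|² ≤ C·q^d·|P|`
for some absolute constant `C`. -/
theorem stmt_13 :
    ∃ C : ℝ, 0 < C ∧
      ∀ (F : Type) [Field F] [Fintype F] [DecidableEq F],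
        ringChar F ≠ 2 →
        ∀ (χ : AddChar F ℂ), χ ≠ 1 →
        ∀ (d : ℕ), 0 < d →
        ∀ (P : Finset ((Fin d → F) × (Fin d → F))),
          (Fintype.card F : ℝ) ^ (3 * d - 1) * ((Fintype.card F : ℝ) - 1) *
            ∑ mm' ∈ Finset.univ.filter
                (fun mm' : (Fin d → F) × (Fin d → F) =>
                  mm' ≠ 0 ∧ mm'.1 ⬝ᵥ mm'.1 = mm'.2 ⬝ᵥ mm'.2),
              ‖((Fintype.card F : ℂ) ^ (2 * d))⁻¹ *
                ∑ p ∈ P, χ (-(p.1 ⬝ᵥ mm'.1) - p.2 ⬝ᵥ mm'.2)‖ ^ 2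
            ≤ C * (Fintype.card F : ℝ) ^ d * P.card := by
  refine ⟨1, one_pos, ?_⟩
  intro F _ _ _ _ χ hχ d hd P
  classical
  set q : ℝ := (Fintype.card F : ℝ) with hqdef
  have hq1 : (1 : ℝ) ≤ q := by
    rw [hqdef]; exact_mod_cast Fintype.card_pos
  have hq0 : (0 : ℝ) < q := lt_of_lt_of_le one_pos hq1
  have hqd : (0 : ℝ) < q ^ (2 * d) := pow_pos hq0 _
  -- each term rewrite
  have hterm : ∀ mm' : (Fin d → F) × (Fin d → F),
      ‖((Fintype.card F : ℂ) ^ (2 * d))⁻¹ *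
          ∑ p ∈ P, χ (-(p.1 ⬝ᵥ mm'.1) - p.2 ⬝ᵥ mm'.2)‖ ^ 2
      = ((q ^ (2 * d))⁻¹) ^ 2 *
          ‖∑ p ∈ P, χ (-(p.1 ⬝ᵥ mm'.1) - p.2 ⬝ᵥ mm'.2)‖ ^ 2 := by
    intro mm'
    rw [norm_mul, mul_pow, norm_inv, norm_pow, Complex.norm_natCast]
  -- bound the filtered sum by the full sum
  have hsub : ∑ mm' ∈ Finset.univ.filter
        (fun mm' : (Fin d → F) × (Fin d → F) =>
          mm' ≠ 0 ∧ mm'.1 ⬝ᵥ mm'.1 = mm'.2 ⬝ᵥ mm'.2),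
      ‖((Fintype.card F : ℂ) ^ (2 * d))⁻¹ *
        ∑ p ∈ P, χ (-(p.1 ⬝ᵥ mm'.1) - p.2 ⬝ᵥ mm'.2)‖ ^ 2
      ≤ (P.card : ℝ) * (q ^ (2 * d))⁻¹ := by
    have h1 : ∑ mm' ∈ Finset.univ.filter
          (fun mm' : (Fin d → F) × (Fin d → F) =>
            mm' ≠ 0 ∧ mm'.1 ⬝ᵥ mm'.1 = mm'.2 ⬝ᵥ mm'.2),
        ‖((Fintype.card F : ℂ) ^ (2 * d))⁻¹ *
          ∑ p ∈ P, χ (-(p.1 ⬝ᵥ mm'.1) - p.2 ⬝ᵥ mm'.2)‖ ^ 2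
        ≤ ∑ mm' : (Fin d → F) × (Fin d → F),
        ‖((Fintype.card F : ℂ) ^ (2 * d))⁻¹ *
          ∑ p ∈ P, χ (-(p.1 ⬝ᵥ mm'.1) - p.2 ⬝ᵥ mm'.2)‖ ^ 2 :=
      Finset.sum_le_sum_of_subset_of_nonneg (Finset.filter_subset _ _)
        (fun _ _ _ => by positivity)
    refine h1.trans_eq ?_
    simp_rw [hterm]
    rw [← Finset.mul_sum, aux_plancherel χ hχ P, ← hqdef]
    field_simp
  have hA0 : (0 : ℝ) ≤ ∑ mm' ∈ Finset.univ.filter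
        (fun mm' : (Fin d → F) × (Fin d → F) =>
          mm' ≠ 0 ∧ mm'.1 ⬝ᵥ mm'.1 = mm'.2 ⬝ᵥ mm'.2),
      ‖((Fintype.card F : ℂ) ^ (2 * d))⁻¹ *
        ∑ p ∈ P, χ (-(p.1 ⬝ᵥ mm'.1) - p.2 ⬝ᵥ mm'.2)‖ ^ 2 :=
    Finset.sum_nonneg fun _ _ => by positivity
  have hfac : q ^ (3 * d - 1) * (q - 1) ≤ q ^ (3 * d) := by
    have h3d : 3 * d - 1 + 1 = 3 * d := by omega
    calc q ^ (3 * d - 1) * (q - 1) ≤ q ^ (3 * d - 1) * q :=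
          mul_le_mul_of_nonneg_left (by linarith) (pow_nonneg hq0.le _)
      _ = q ^ (3 * d) := by rw [← pow_succ, h3d]
  have hfac0 : (0 : ℝ) ≤ q ^ (3 * d - 1) * (q - 1) := by
    have : (0:ℝ) ≤ q - 1 := by linarith
    positivity
  calc q ^ (3 * d - 1) * (q - 1) *
        ∑ mm' ∈ Finset.univ.filter
            (fun mm' : (Fin d → F) × (Fin d → F) =>
              mm' ≠ 0 ∧ mm'.1 ⬝ᵥ mm'.1 = mm'.2 ⬝ᵥ mm'.2),
          ‖((Fintype.card F : ℂ) ^ (2 * d))⁻¹ *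
            ∑ p ∈ P, χ (-(p.1 ⬝ᵥ mm'.1) - p.2 ⬝ᵥ mm'.2)‖ ^ 2
      ≤ q ^ (3 * d) * ((P.card : ℝ) * (q ^ (2 * d))⁻¹) :=
        mul_le_mul hfac hsub hA0 (pow_nonneg hq0.le _)
    _ = 1 * q ^ d * P.card := by
        rw [show 3 * d = d + 2 * d by ring, pow_add]
        field_simp
end
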